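/- arXiv:2504.14756 — 2 statements merged into one kernel-verified Lean document; each statement's English description precedes it below -/
import Mathlib

section
/- Let X₊(ρ,p,u) = (ρ, κp, √(κp/ρ)), X₋(ρ,p,u) = (ρ, κp, −√(κp/ρ)), X₀(ρ,p,u) = (1,0,0) on the region ρ > 0, p > 0 (with κ = 1). Then [X₊, X₀] = (1/(4ρ))X₊ − (1/(4ρ))X₋ − X₀ and [X₀, X₋] = (1/(4ρ))X₊ − (1/(4ρ))X₋ + X₀. -/
noncomputable section

/-- Lie bracket of vector fields on `ℝ³`: `[X,Y] = (DY)X − (DX)Y`. -/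
def bracket (X Y : (Fin 3 → ℝ) → (Fin 3 → ℝ)) : (Fin 3 → ℝ) → (Fin 3 → ℝ) :=
  fun p => fderiv ℝ Y p (X p) - fderiv ℝ X p (Y p)

/-- `X₊(ρ,p,u) = (ρ, p, √(p/ρ))` (Euler eigenvector field, κ = 1). -/
def Xplus : (Fin 3 → ℝ) → (Fin 3 → ℝ) :=
  fun v => ![v 0, v 1, Real.sqrt (v 1 / v 0)]

/-- `X₋(ρ,p,u) = (ρ, p, −√(p/ρ))`. -/
def Xminus : (Fin 3 → ℝ) → (Fin 3 → ℝ) :=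
  fun v => ![v 0, v 1, -Real.sqrt (v 1 / v 0)]

/-- The entropic eigenvector field `X₀ = (1,0,0)`. -/
def Xzero : (Fin 3 → ℝ) → (Fin 3 → ℝ) := fun _ => ![1, 0, 0]

/-- With κ = 1, on `ρ > 0`, `p > 0`:
`[X₊, X₀] = (1/(4ρ))X₊ − (1/(4ρ))X₋ − X₀` and `[X₀, X₋] = (1/(4ρ))X₊ − (1/(4ρ))X₋ + X₀`. -/
theorem euler_mixed_brackets :
    ∀ v : Fin 3 → ℝ, 0 < v 0 → 0 < v 1 →
      bracket Xplus Xzero v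
          = (1 / (4 * v 0)) • Xplus v - (1 / (4 * v 0)) • Xminus v - Xzero v ∧
      bracket Xzero Xminus v
          = (1 / (4 * v 0)) • Xplus v - (1 / (4 * v 0)) • Xminus v + Xzero v := by
  intro v h0 h1
  have h0' : v 0 ≠ 0 := ne_of_gt h0
  have hq : 0 < v 1 / v 0 := div_pos h1 h0
  have hs : Real.sqrt (v 1 / v 0) ≠ 0 := ne_of_gt (Real.sqrt_pos.2 hq)
  have hss : Real.sqrt (v 1 / v 0) * Real.sqrt (v 1 / v 0) * v 0 = v 1 := by
    rw [Real.mul_self_sqrt hq.le]; field_simp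
  have hinv : HasFDerivAt (fun x : Fin 3 → ℝ => (x 0)⁻¹)
      ((-(v 0 ^ 2)⁻¹) • (ContinuousLinearMap.proj 0 : (Fin 3 → ℝ) →L[ℝ] ℝ)) v :=
    HasDerivAt.comp_hasFDerivAt v (hasDerivAt_inv h0') (hasFDerivAt_apply 0 v)
  have hmul := (hasFDerivAt_apply 1 v).mul hinv
  have hdiv : HasFDerivAt (fun x : Fin 3 → ℝ => x 1 / x 0)
      ((v 1) • ((-(v 0 ^ 2)⁻¹) • (ContinuousLinearMap.proj 0 : (Fin 3 → ℝ) →L[ℝ] ℝ))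
        + (v 0)⁻¹ • (ContinuousLinearMap.proj 1 : (Fin 3 → ℝ) →L[ℝ] ℝ)) v := by
    simp only [div_eq_mul_inv]; exact hmul
  have hsq := hdiv.sqrt (ne_of_gt hq)
  set L2 : (Fin 3 → ℝ) →L[ℝ] ℝ :=
    (1 / (2 * Real.sqrt (v 1 / v 0))) •
      ((v 1) • ((-(v 0 ^ 2)⁻¹) • (ContinuousLinearMap.proj 0 : (Fin 3 → ℝ) →L[ℝ] ℝ))
        + (v 0)⁻¹ • (ContinuousLinearMap.proj 1 : (Fin 3 → ℝ) →L[ℝ] ℝ)) with hL2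
  have hP : HasFDerivAt Xplus (ContinuousLinearMap.pi
      ![(ContinuousLinearMap.proj 0 : (Fin 3 → ℝ) →L[ℝ] ℝ),
        (ContinuousLinearMap.proj 1 : (Fin 3 → ℝ) →L[ℝ] ℝ), L2]) v := by
    have hXp : Xplus = fun x i =>
        ![(fun x : Fin 3 → ℝ => x 0), (fun x : Fin 3 → ℝ => x 1),
          (fun x : Fin 3 → ℝ => Real.sqrt (x 1 / x 0))] i x := by
      funext x i; fin_cases i <;> rfl
    rw [hXp]
    refine hasFDerivAt_pi.2 ?_
    intro i
    fin_cases i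
    · exact hasFDerivAt_apply 0 v
    · exact hasFDerivAt_apply 1 v
    · exact hsq
  have hM : HasFDerivAt Xminus (ContinuousLinearMap.pi
      ![(ContinuousLinearMap.proj 0 : (Fin 3 → ℝ) →L[ℝ] ℝ),
        (ContinuousLinearMap.proj 1 : (Fin 3 → ℝ) →L[ℝ] ℝ), -L2]) v := by
    have hXm : Xminus = fun x i =>
        ![(fun x : Fin 3 → ℝ => x 0), (fun x : Fin 3 → ℝ => x 1),
          (fun x : Fin 3 → ℝ => -Real.sqrt (x 1 / x 0))] i x := by
      funext x i; fin_cases i <;> rfl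
    rw [hXm]
    refine hasFDerivAt_pi.2 ?_
    intro i
    fin_cases i
    · exact hasFDerivAt_apply 0 v
    · exact hasFDerivAt_apply 1 v
    · exact hsq.neg
  have hZ : fderiv ℝ Xzero v = 0 := fderiv_const_apply _
  constructor
  · funext i
    simp only [bracket, hZ, hP.fderiv, ContinuousLinearMap.zero_apply,
      Pi.sub_apply, Pi.smul_apply, Pi.add_apply, ContinuousLinearMap.pi_apply]
    fin_cases i <;>
      simp only [Fin.zero_eta, Fin.mk_one, Fin.reduceFinMk, Matrix.cons_val_zero, Matrix.cons_val_one, Matrix.head_cons,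
        Matrix.cons_val_two, Matrix.tail_cons, Xplus, Xminus, Xzero, Pi.zero_apply, hL2,
        ContinuousLinearMap.smul_apply, ContinuousLinearMap.add_apply,
        ContinuousLinearMap.proj_apply, smul_eq_mul] <;>
      field_simp <;> ring_nf <;> rw [Real.sq_sqrt (mul_nonneg h1.le (inv_nonneg.2 h0.le))] <;> field_simp
  · funext i
    simp only [bracket, hZ, hM.fderiv, ContinuousLinearMap.zero_apply,
      Pi.sub_apply, Pi.smul_apply, Pi.add_apply, ContinuousLinearMap.pi_apply]
    fin_cases i <;>
      simp only [Fin.zero_eta, Fin.mk_one, Fin.reduceFinMk, Matrix.cons_val_zero, Matrix.cons_val_one, Matrix.head_cons,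
        Matrix.cons_val_two, Matrix.tail_cons, Xplus, Xminus, Xzero, Pi.zero_apply, hL2,
        ContinuousLinearMap.neg_apply, ContinuousLinearMap.smul_apply,
        ContinuousLinearMap.add_apply, ContinuousLinearMap.proj_apply, smul_eq_mul] <;>
      field_simp <;> ring_nf <;> rw [Real.sq_sqrt (mul_nonneg h1.le (inv_nonneg.2 h0.le))] <;> field_simp
end
end

section
/- With κ = 1 and Z = X₊ − X₋ = (0,0,2√(p/ρ)) on ρ,p > 0, for every natural number n ≥ 1 the following bracket identities hold: [ρ⁻ⁿZ, ρ⁻ᵐZ] = 0, [X₀, ρ⁻ⁿZ] = −(n + 1/2)·ρ⁻⁽ⁿ⁺¹⁾Z, [X₊, ρ⁻ⁿZ] = −n·ρ⁻ⁿZ, and [X₋, ρ⁻ⁿZ] = −n·ρ⁻ⁿZ. -/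
noncomputable section

/-- `Z := X₊ − X₋ = (0,0,2√(p/ρ))`. -/
def Z : (Fin 3 → ℝ) → (Fin 3 → ℝ) := fun v => Xplus v - Xminus v

/-- The vector field `ρ⁻ⁿ Z`, pointwise scalar multiple of `Z` by `ρ⁻ⁿ`. -/
def rhoZ (n : ℕ) : (Fin 3 → ℝ) → (Fin 3 → ℝ) := fun v => (v 0 ^ n)⁻¹ • Z v

abbrev pr (i : Fin 3) : (Fin 3 → ℝ) →L[ℝ] ℝ := ContinuousLinearMap.proj i

lemma hasF (c α β : ℝ) (v : Fin 3 → ℝ) (h0 : 0 < v 0) (h1 : 0 < v 1) :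
    HasFDerivAt (fun w : Fin 3 → ℝ => c * (w 0) ^ α * (w 1) ^ β)
      ((c * α * (v 0) ^ (α - 1) * (v 1) ^ β) • pr 0 +
       (c * β * (v 0) ^ α * (v 1) ^ (β - 1)) • pr 1) v := by
  have hA : HasFDerivAt (fun w : Fin 3 → ℝ => (w 0) ^ α)
      ((α * (v 0) ^ (α - 1)) • pr 0) v := by
    have := (Real.hasDerivAt_rpow_const (p := α) (Or.inl h0.ne')).comp_hasFDerivAt v
      (hasFDerivAt_apply (𝕜 := ℝ) 0 v)
    exact this
  have hB : HasFDerivAt (fun w : Fin 3 → ℝ => (w 1) ^ β)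
      ((β * (v 1) ^ (β - 1)) • pr 1) v := by
    have := (Real.hasDerivAt_rpow_const (p := β) (Or.inl h1.ne')).comp_hasFDerivAt v
      (hasFDerivAt_apply (𝕜 := ℝ) 1 v)
    exact this
  have := (hA.const_mul c).mul hB
  refine this.congr_fderiv ?_
  ext w
  simp [ContinuousLinearMap.smul_apply, ContinuousLinearMap.add_apply]
  ring

lemma sqrt_div_eq {a b : ℝ} (h0 : 0 < a) (h1 : 0 < b) :
    Real.sqrt (b / a) = a ^ (-(1:ℝ)/2) * b ^ ((1:ℝ)/2) := by
  rw [Real.sqrt_eq_rpow, Real.div_rpow h1.le h0.le, div_eq_mul_inv,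
    ← Real.rpow_neg h0.le, mul_comm]
  norm_num

lemma rhoZ_eq (n : ℕ) (v : Fin 3 → ℝ) :
    rhoZ n v = ![0, 0, (v 0 ^ n)⁻¹ * (2 * Real.sqrt (v 1 / v 0))] := by
  funext i
  fin_cases i
  · show (v 0 ^ n)⁻¹ * (Z v 0) = 0
    simp [Z, Xplus, Xminus]
  · show (v 0 ^ n)⁻¹ * (Z v 1) = 0
    simp [Z, Xplus, Xminus]
  · show (v 0 ^ n)⁻¹ * (Z v 2) = _
    have hz : Z v 2 = 2 * Real.sqrt (v 1 / v 0) := by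
      show Xplus v 2 - Xminus v 2 = _
      simp [Xplus, Xminus]
      ring
    rw [hz]
    simp

lemma rhoZ_rpow {v : Fin 3 → ℝ} (n : ℕ) (h0 : 0 < v 0) (h1 : 0 < v 1) :
    (v 0 ^ n)⁻¹ * (2 * Real.sqrt (v 1 / v 0))
      = 2 * (v 0) ^ (-(n:ℝ) - 1/2) * (v 1) ^ ((1:ℝ)/2) := by
  rw [sqrt_div_eq h0 h1, show ((v 0 ^ n)⁻¹ : ℝ) = (v 0) ^ (-(n:ℝ)) by
      rw [← Real.rpow_natCast (v 0) n, ← Real.rpow_neg h0.le],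
    show (-(n:ℝ) - 1/2) = (-(n:ℝ)) + (-(1:ℝ)/2) by ring, Real.rpow_add h0]
  ring

def U : Set (Fin 3 → ℝ) := {w | 0 < w 0 ∧ 0 < w 1}

lemma U_mem_nhds {v : Fin 3 → ℝ} (h0 : 0 < v 0) (h1 : 0 < v 1) : U ∈ nhds v :=
  (((isOpen_lt continuous_const (continuous_apply 0)).inter
      (isOpen_lt continuous_const (continuous_apply 1)))).mem_nhds ⟨h0, h1⟩

/-- derivative of `rhoZ n`. -/
def Ld (n : ℕ) (v : Fin 3 → ℝ) : (Fin 3 → ℝ) →L[ℝ] (Fin 3 → ℝ) :=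
  ContinuousLinearMap.pi
    ![0, 0,
      (2 * (-(n:ℝ) - 1/2) * (v 0) ^ (-(n:ℝ) - 1/2 - 1) * (v 1) ^ ((1:ℝ)/2)) • pr 0 +
      (2 * ((1:ℝ)/2) * (v 0) ^ (-(n:ℝ) - 1/2) * (v 1) ^ ((1:ℝ)/2 - 1)) • pr 1]

lemma rhoZ_hasFDerivAt (n : ℕ) {v : Fin 3 → ℝ} (h0 : 0 < v 0) (h1 : 0 < v 1) :
    HasFDerivAt (rhoZ n) (Ld n v) v := by
  have hG : HasFDerivAt
      (fun w : Fin 3 → ℝ =>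
        (![(0:ℝ), 0, 2 * (w 0) ^ (-(n:ℝ) - 1/2) * (w 1) ^ ((1:ℝ)/2)] : Fin 3 → ℝ))
      (Ld n v) v := by
    apply hasFDerivAt_pi''
    intro i
    fin_cases i <;>
      simp only [Ld, ContinuousLinearMap.proj_pi, Matrix.cons_val_zero, Matrix.cons_val_one,
        Matrix.head_cons, Matrix.cons_val_two, Matrix.tail_cons, Fin.isValue]
    · exact hasFDerivAt_const 0 v
    · exact hasFDerivAt_const 0 v
    · have := hasF 2 (-(n:ℝ) - 1/2) ((1:ℝ)/2) v h0 h1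
      exact this
  refine hG.congr_of_eventuallyEq ?_
  filter_upwards [U_mem_nhds h0 h1] with w hw
  rw [rhoZ_eq, rhoZ_rpow n hw.1 hw.2]

/-- derivative of `Xplus`/`Xminus` with sign `c = 1` resp. `-1`. -/
def Lpm (c : ℝ) (v : Fin 3 → ℝ) : (Fin 3 → ℝ) →L[ℝ] (Fin 3 → ℝ) :=
  ContinuousLinearMap.pi
    ![pr 0, pr 1,
      (c * (-(1:ℝ)/2) * (v 0) ^ (-(1:ℝ)/2 - 1) * (v 1) ^ ((1:ℝ)/2)) • pr 0 +
      (c * ((1:ℝ)/2) * (v 0) ^ (-(1:ℝ)/2) * (v 1) ^ ((1:ℝ)/2 - 1)) • pr 1]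

lemma pm_hasFDerivAt (c : ℝ) {v : Fin 3 → ℝ} (h0 : 0 < v 0) (h1 : 0 < v 1) :
    HasFDerivAt (fun w : Fin 3 → ℝ =>
      (![w 0, w 1, c * Real.sqrt (w 1 / w 0)] : Fin 3 → ℝ)) (Lpm c v) v := by
  have hG : HasFDerivAt
      (fun w : Fin 3 → ℝ =>
        (![w 0, w 1, c * (w 0) ^ (-(1:ℝ)/2) * (w 1) ^ ((1:ℝ)/2)] : Fin 3 → ℝ))
      (Lpm c v) v := by
    apply hasFDerivAt_pi''
    intro i
    fin_cases i <;>
      simp only [Lpm, ContinuousLinearMap.proj_pi, Matrix.cons_val_zero, Matrix.cons_val_one,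
        Matrix.head_cons, Matrix.cons_val_two, Matrix.tail_cons, Fin.isValue]
    · exact hasFDerivAt_apply 0 v
    · exact hasFDerivAt_apply 1 v
    · exact hasF c (-(1:ℝ)/2) ((1:ℝ)/2) v h0 h1
  refine hG.congr_of_eventuallyEq ?_
  filter_upwards [U_mem_nhds h0 h1] with w hw
  funext i
  fin_cases i <;> simp [sqrt_div_eq hw.1 hw.2] <;> ring

lemma Xplus_fderiv {v : Fin 3 → ℝ} (h0 : 0 < v 0) (h1 : 0 < v 1) :
    fderiv ℝ Xplus v = Lpm 1 v := by
  have h := pm_hasFDerivAt 1 h0 h1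
  have : Xplus = fun w : Fin 3 → ℝ => (![w 0, w 1, 1 * Real.sqrt (w 1 / w 0)] : Fin 3 → ℝ) := by
    funext w; simp [Xplus]
  rw [this]; exact h.fderiv

lemma Xminus_fderiv {v : Fin 3 → ℝ} (h0 : 0 < v 0) (h1 : 0 < v 1) :
    fderiv ℝ Xminus v = Lpm (-1) v := by
  have h := pm_hasFDerivAt (-1) h0 h1
  have heq : Xminus = fun w : Fin 3 → ℝ =>
      (![w 0, w 1, (-1:ℝ) * Real.sqrt (w 1 / w 0)] : Fin 3 → ℝ) := by
    funext w; simp [Xminus, neg_one_mul]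
  rw [heq]; exact h.fderiv

lemma Ld_apply (k : ℕ) (v w : Fin 3 → ℝ) : Ld k v w =
    ![0, 0,
      2 * (-(k:ℝ) - 1/2) * (v 0) ^ (-(k:ℝ) - 1/2 - 1) * (v 1) ^ ((1:ℝ)/2) * w 0 +
      2 * ((1:ℝ)/2) * (v 0) ^ (-(k:ℝ) - 1/2) * (v 1) ^ ((1:ℝ)/2 - 1) * w 1] := by
  funext i
  fin_cases i <;> simp [Ld]

lemma Lpm_apply (c : ℝ) (v w : Fin 3 → ℝ) : Lpm c v w =
    ![w 0, w 1,
      c * (-(1:ℝ)/2) * (v 0) ^ (-(1:ℝ)/2 - 1) * (v 1) ^ ((1:ℝ)/2) * w 0 +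
      c * ((1:ℝ)/2) * (v 0) ^ (-(1:ℝ)/2) * (v 1) ^ ((1:ℝ)/2 - 1) * w 1] := by
  funext i
  fin_cases i <;> simp [Lpm]

lemma smul_rhoZ (c : ℝ) (k : ℕ) {v : Fin 3 → ℝ} (h0 : 0 < v 0) (h1 : 0 < v 1) :
    c • rhoZ k v = ![0, 0, c * (2 * (v 0) ^ (-(k:ℝ) - 1/2) * (v 1) ^ ((1:ℝ)/2))] := by
  rw [rhoZ_eq, rhoZ_rpow k h0 h1]
  funext i
  fin_cases i <;> simp

/-- For `n, m ≥ 1`, on `ρ > 0`, `p > 0`: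
`[ρ⁻ⁿZ, ρ⁻ᵐZ] = 0`, `[X₀, ρ⁻ⁿZ] = −(n+1/2)ρ⁻⁽ⁿ⁺¹⁾Z`,
`[X₊, ρ⁻ⁿZ] = −n ρ⁻ⁿZ`, `[X₋, ρ⁻ⁿZ] = −n ρ⁻ⁿZ`. -/
theorem euler_rhoZ_brackets :
    ∀ n m : ℕ, 1 ≤ n → 1 ≤ m →
      ∀ v : Fin 3 → ℝ, 0 < v 0 → 0 < v 1 →
        bracket (rhoZ n) (rhoZ m) v = 0 ∧
        bracket Xzero (rhoZ n) v = (-((n : ℝ) + 1 / 2)) • rhoZ (n + 1) v ∧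
        bracket Xplus (rhoZ n) v = (-(n : ℝ)) • rhoZ n v ∧
        bracket Xminus (rhoZ n) v = (-(n : ℝ)) • rhoZ n v := by
  intro n m hn hm v h0 h1
  have hdn := (rhoZ_hasFDerivAt n h0 h1).fderiv
  have hdm := (rhoZ_hasFDerivAt m h0 h1).fderiv
  have hz0 : ∀ k : ℕ, rhoZ k v 0 = 0 := by intro k; rw [rhoZ_eq]; simp
  have hz1 : ∀ k : ℕ, rhoZ k v 1 = 0 := by intro k; rw [rhoZ_eq]; simp
  have E0 : (v 0) ^ (-(n:ℝ) - 1/2 - 1) * v 0 = (v 0) ^ (-(n:ℝ) - 1/2) := by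
    rw [← Real.rpow_add_one h0.ne']
    congr 1
    ring
  have E1 : (v 1) ^ ((1:ℝ)/2 - 1) * v 1 = (v 1) ^ ((1:ℝ)/2) := by
    rw [← Real.rpow_add_one h1.ne']
    congr 1
    ring
  have E2 : (v 1) ^ ((1:ℝ)/2 - 1) = (v 1) ^ (-((1:ℝ)/2)) := by
    congr 1
    ring
  have ep0 : Xplus v 0 = v 0 := rfl
  have ep1 : Xplus v 1 = v 1 := rfl
  have em0 : Xminus v 0 = v 0 := rfl
  have em1 : Xminus v 1 = v 1 := rfl
  have ez0 : Xzero v 0 = 1 := rfl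
  have ez1 : Xzero v 1 = 0 := rfl
  refine ⟨?_, ?_, ?_, ?_⟩
  · funext i
    simp only [bracket, hdn, hdm, Pi.sub_apply, Ld_apply, hz0, hz1, Pi.zero_apply]
    fin_cases i <;> norm_num
  · have hc : fderiv ℝ Xzero v = (0 : (Fin 3 → ℝ) →L[ℝ] (Fin 3 → ℝ)) := fderiv_const_apply _
    rw [smul_rhoZ _ _ h0 h1,
      show (-((n + 1 : ℕ) : ℝ) - 1/2) = (-(n:ℝ) - 1/2 - 1) by push_cast; ring]
    funext i
    simp only [bracket, hdn, hc, ContinuousLinearMap.zero_apply, Pi.sub_apply, Ld_apply,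
      Pi.zero_apply, ez0, ez1]
    fin_cases i
    · simp
    · simp
    · norm_num <;> ring
  · rw [smul_rhoZ _ _ h0 h1]
    funext i
    simp only [bracket, hdn, Xplus_fderiv h0 h1, Pi.sub_apply, Ld_apply, Lpm_apply,
      hz0, hz1, ep0, ep1]
    fin_cases i
    · simp
    · simp
    · norm_num
      linear_combination (2 * (-(n:ℝ) - 1/2) * (v 1) ^ ((1:ℝ)/2)) * E0 +
        ((v 0) ^ (-(n:ℝ) - 1/2)) * E1 - ((v 0) ^ (-(n:ℝ) - 1/2) * v 1) * E2
  · rw [smul_rhoZ _ _ h0 h1]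
    funext i
    simp only [bracket, hdn, Xminus_fderiv h0 h1, Pi.sub_apply, Ld_apply, Lpm_apply,
      hz0, hz1, em0, em1]
    fin_cases i
    · simp
    · simp
    · norm_num
      linear_combination (2 * (-(n:ℝ) - 1/2) * (v 1) ^ ((1:ℝ)/2)) * E0 +
        ((v 0) ^ (-(n:ℝ) - 1/2)) * E1 - ((v 0) ^ (-(n:ℝ) - 1/2) * v 1) * E2
end
end
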